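/- Let {φ_e}_{e∈E} be a conformal iterated function system in ℝⁿ with limit set J, and assume X ∖ closure(⋃_{e∈E} φ_e(X)) ≠ ∅. Then there exists an open ball B contained in the interior of X such that B ∩ J = ∅ and φ_ω(B) ∩ J = ∅ for every nonempty finite word ω over E. -/

import Mathlib

open Metric Set
open scoped RealInnerProductSpace

lemma subsingleton_isOpen {α : Type*} [TopologicalSpace α] [Subsingleton α] (s : Set α) :
    IsOpen s := by
  rcases s.eq_empty_or_nonempty with rfl | ⟨a, ha⟩
  · exact isOpen_empty
  · have : s = univ := eq_univ_of_forall fun x => (Subsingleton.elim x a) ▸ ha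
    rw [this]; exact isOpen_univ

lemma open_image_of_conformal_inj {n : ℕ} {U : Set (EuclideanSpace ℝ (Fin n))}
    {f : EuclideanSpace ℝ (Fin n) → EuclideanSpace ℝ (Fin n)}
    {D : EuclideanSpace ℝ (Fin n) → EuclideanSpace ℝ (Fin n) →L[ℝ] EuclideanSpace ℝ (Fin n)}
    (hf : ∀ x ∈ U, HasFDerivAt f (D x) x)
    (hconf : ∀ x ∈ U, IsConformalMap (D x))
    (hinj : Set.InjOn f U)
    {V : Set (EuclideanSpace ℝ (Fin n))} (hV : IsOpen V) (hVU : V ⊆ U) :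
    IsOpen (f '' V) := by
  rcases subsingleton_or_nontrivial (EuclideanSpace ℝ (Fin n)) with hss | hnt
  · exact subsingleton_isOpen _
  rw [Metric.isOpen_iff]
  rintro y ⟨x, hxV, rfl⟩
  obtain ⟨ε, εpos, hε⟩ := Metric.isOpen_iff.1 hV x hxV
  set r := ε / 2 with hr
  have rpos : 0 < r := by positivity
  have hball : closedBall x r ⊆ V := fun w hw =>
    hε (mem_ball.2 (lt_of_le_of_lt (mem_closedBall.1 hw) (by rw [hr]; linarith)))
  have hballU : closedBall x r ⊆ U := hball.trans hVU
  have cont : ContinuousOn f (closedBall x r) := fun w hw =>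
    ((hf w (hballU hw)).continuousAt).continuousWithinAt
  have hScomp : IsCompact (f '' sphere x r) :=
    (isCompact_sphere x r).image_of_continuousOn (cont.mono sphere_subset_closedBall)
  have hfxS : f x ∉ f '' sphere x r := by
    rintro ⟨s, hs, hfs⟩
    have hsx : s = x := hinj (hballU (sphere_subset_closedBall hs)) (hVU hxV) hfs
    rw [hsx, mem_sphere, dist_self] at hs
    exact rpos.ne' hs.symm
  have hSne : (f '' sphere x r).Nonempty :=
    ((NormedSpace.sphere_nonempty (x := x)).2 rpos.le).image f
  set d := infDist (f x) (f '' sphere x r) with hd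
  have dpos : 0 < d := by
    rw [hd, ← hScomp.isClosed.notMem_iff_infDist_pos hSne]
    exact hfxS
  refine ⟨d / 2, by positivity, ?_⟩
  intro y hy
  rw [mem_ball] at hy
  obtain ⟨z, hzball, hzmin⟩ := (isCompact_closedBall x r).exists_isMinOn
    ⟨x, mem_closedBall_self rpos.le⟩ (cont.sub continuousOn_const).norm
  have hzx : dist (f z) y ≤ dist (f x) y := by
    have := hzmin (mem_closedBall_self rpos.le)
    simpa [dist_eq_norm] using this
  have hzlt : dist z x < r := by
    rcases lt_or_eq_of_le (mem_closedBall.1 hzball) with h | h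
    · exact h
    · exfalso
      have hfz : f z ∈ f '' sphere x r := ⟨z, mem_sphere.2 h, rfl⟩
      have h1 : d ≤ dist (f x) (f z) := infDist_le_dist_of_mem hfz
      have h2 : dist (f x) (f z) ≤ dist (f x) y + dist y (f z) := dist_triangle _ _ _
      have h3 : dist y (f z) ≤ dist (f x) y := by rw [dist_comm]; exact hzx
      have h4 : dist (f x) y < d / 2 := by rw [dist_comm]; exact hy
      linarith
  have hzU : z ∈ U := hballU hzball
  have h1 : IsLocalMin (fun w => ‖f w - y‖) z :=
    hzmin.isLocalMin (Filter.mem_of_superset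
      (isOpen_ball.mem_nhds (mem_ball.2 hzlt)) ball_subset_closedBall)
  have hloc : IsLocalMin (fun w => ⟪f w - y, f w - y⟫) z := by
    refine Filter.Eventually.mono h1 fun w hw => ?_
    simp only [real_inner_self_eq_norm_sq]
    exact pow_le_pow_left₀ (norm_nonneg _) hw 2
  have hsub : HasFDerivAt (fun w => f w - y) (D z) z := (hf z hzU).sub_const y
  have hinner := hsub.inner ℝ hsub
  have hL := hloc.hasFDerivAt_eq_zero hinner
  obtain ⟨c, hc, li, hli⟩ := hconf z hzU
  have hsurj : Function.Surjective li.toLinearMap :=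
    (LinearMap.injective_iff_surjective).1 li.injective
  obtain ⟨u, hu⟩ := hsurj (c⁻¹ • (f z - y))
  have hDu : D z u = f z - y := by
    rw [hli]
    show c • li u = f z - y
    rw [show li.toLinearMap u = li u from rfl] at hu
    rw [hu, smul_smul, mul_inv_cancel₀ hc, one_smul]
  have hzero : (⟪f z - y, f z - y⟫) + ⟪f z - y, f z - y⟫ = 0 := by
    have := ContinuousLinearMap.ext_iff.1 hL u
    simp only [ContinuousLinearMap.comp_apply, ContinuousLinearMap.prod_apply,
      fderivInnerCLM_apply, ContinuousLinearMap.zero_apply, hDu] at this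
    rw [real_inner_comm (f z - y) (f z - y)] at this
    linarith [this]
  have : f z - y = 0 := by
    have h5 : (⟪f z - y, f z - y⟫) = 0 := by linarith
    exact inner_self_eq_zero.1 h5
  exact ⟨z, hball (ball_subset_closedBall (mem_ball.2 hzlt)), by
    rw [sub_eq_zero] at this; exact this⟩



/-- A conformal iterated function system in `ℝⁿ` (single-vertex conformal GDMS):
a compact connected set `X` equal to the closure of its interior, an open connected
set `W ⊇ X`, and injective `C¹` maps `φ e : W → W` with conformal (invertibly similar)
derivatives `D e`, mapping `X` into `X`, with Lipschitz constant at most `s ∈ (0,1)`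
on `W`, satisfying the Open Set Condition. -/
structure CIFS (n : ℕ) (E : Type*) where
  X : Set (EuclideanSpace ℝ (Fin n))
  W : Set (EuclideanSpace ℝ (Fin n))
  φ : E → EuclideanSpace ℝ (Fin n) → EuclideanSpace ℝ (Fin n)
  D : E → EuclideanSpace ℝ (Fin n) → EuclideanSpace ℝ (Fin n) →L[ℝ] EuclideanSpace ℝ (Fin n)
  s : ℝ
  hs : s ∈ Set.Ioo (0 : ℝ) 1
  hXcompact : IsCompact X
  hXconn : IsConnected X
  hXreg : X = closure (interior X)
  hWopen : IsOpen W
  hWconn : IsConnected W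
  hXW : X ⊆ W
  hInj : ∀ e, Set.InjOn (φ e) W
  hMapsW : ∀ e, Set.MapsTo (φ e) W W
  hMapsX : ∀ e, Set.MapsTo (φ e) X X
  hDeriv : ∀ e, ∀ x ∈ W, HasFDerivAt (φ e) (D e x) x
  hConf : ∀ e, ∀ x ∈ W, IsConformalMap (D e x)
  hLip : ∀ e, LipschitzOnWith s.toNNReal (φ e) W
  hOSC : ∀ a b : E, a ≠ b → Disjoint (φ a '' interior X) (φ b '' interior X)

namespace CIFS

variable {n : ℕ} {E : Type*}

/-- The composition `φ_ω = φ_{ω₁} ∘ ⋯ ∘ φ_{ωₙ}` associated to a finite word `ω`. -/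
def compWord (S : CIFS n E) (ω : List E) :
    EuclideanSpace ℝ (Fin n) → EuclideanSpace ℝ (Fin n) :=
  ω.foldr (fun e g => S.φ e ∘ g) id

/-- The derivative of `φ_ω` at a point, computed by the chain rule. -/
noncomputable def derivWord (S : CIFS n E) :
    List E → EuclideanSpace ℝ (Fin n) →
      (EuclideanSpace ℝ (Fin n) →L[ℝ] EuclideanSpace ℝ (Fin n))
  | [], _ => ContinuousLinearMap.id ℝ _
  | e :: ω, x => (S.D e (S.compWord ω x)).comp (S.derivWord ω x)

/-- The Bounded Distortion Property: there is `K ≥ 1` such that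
`‖Dφ_ω(p)‖ ≤ K·‖Dφ_ω(q)‖` for every nonempty word `ω` and all `p, q ∈ W`. -/
def BDP (S : CIFS n E) : Prop :=
  ∃ K : ℝ, 1 ≤ K ∧ ∀ ω : List E, ω ≠ [] → ∀ p ∈ S.W, ∀ q ∈ S.W,
    ‖S.derivWord ω p‖ ≤ K * ‖S.derivWord ω q‖

end CIFS


namespace CIFS

variable {n : ℕ} {E : Type*}

lemma compWord_nil (S : CIFS n E) : S.compWord [] = id := rfl

lemma compWord_cons (S : CIFS n E) (e : E) (ω : List E) :
    S.compWord (e :: ω) = S.φ e ∘ S.compWord ω := rfl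

lemma compWord_singleton (S : CIFS n E) (e : E) :
    S.compWord [e] = S.φ e := rfl

lemma compWord_append (S : CIFS n E) (ω₁ ω₂ : List E) :
    S.compWord (ω₁ ++ ω₂) = S.compWord ω₁ ∘ S.compWord ω₂ := by
  induction ω₁ with
  | nil => rfl
  | cons e t ih =>
    rw [List.cons_append, compWord_cons, compWord_cons, ih, Function.comp_assoc]

lemma mapsTo_W (S : CIFS n E) (ω : List E) : Set.MapsTo (S.compWord ω) S.W S.W := by
  induction ω with
  | nil => exact Set.mapsTo_id _
  | cons e t ih => exact (S.hMapsW e).comp ih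

lemma mapsTo_X (S : CIFS n E) (ω : List E) : Set.MapsTo (S.compWord ω) S.X S.X := by
  induction ω with
  | nil => exact Set.mapsTo_id _
  | cons e t ih => exact (S.hMapsX e).comp ih

lemma injOn_W (S : CIFS n E) (ω : List E) : Set.InjOn (S.compWord ω) S.W := by
  induction ω with
  | nil => exact Set.injOn_id _
  | cons e t ih => exact (S.hInj e).comp ih (S.mapsTo_W t)

lemma continuousOn_φ (S : CIFS n E) (e : E) : ContinuousOn (S.φ e) S.W :=
  fun x hx => ((S.hDeriv e x hx).continuousAt).continuousWithinAt

lemma isOpen_image_φ (S : CIFS n E) (e : E) {V : Set (EuclideanSpace ℝ (Fin n))}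
    (hV : IsOpen V) (hVW : V ⊆ S.W) : IsOpen (S.φ e '' V) :=
  open_image_of_conformal_inj (S.hDeriv e) (S.hConf e) (S.hInj e) hV hVW

lemma interior_subset_W (S : CIFS n E) : interior S.X ⊆ S.W :=
  interior_subset.trans S.hXW

lemma image_interior (S : CIFS n E) (e : E) :
    S.φ e '' interior S.X ⊆ interior S.X := by
  have h1 : S.φ e '' interior S.X ⊆ S.X := by
    rintro y ⟨x, hx, rfl⟩
    exact S.hMapsX e (interior_subset hx)
  exact interior_maximal h1 (S.isOpen_image_φ e isOpen_interior S.interior_subset_W)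

lemma compWord_image_interior (S : CIFS n E) (ω : List E) :
    S.compWord ω '' interior S.X ⊆ interior S.X := by
  induction ω with
  | nil => simp [compWord_nil]
  | cons e t ih =>
    rw [compWord_cons, Set.image_comp]
    exact (Set.image_mono ih).trans (S.image_interior e)

lemma osc_strong (S : CIFS n E) {a c : E} (h : a ≠ c) :
    Disjoint (S.φ a '' interior S.X) (S.φ c '' S.X) := by
  have hopen := S.isOpen_image_φ a isOpen_interior S.interior_subset_W
  have hdisj := S.hOSC a c h
  have hcl : S.φ c '' S.X ⊆ closure (S.φ c '' interior S.X) := by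
    have hc : ContinuousOn (S.φ c) (closure (interior S.X)) :=
      (S.continuousOn_φ c).mono (by rw [← S.hXreg]; exact S.hXW)
    intro y hy
    rw [S.hXreg] at hy
    obtain ⟨x, hx, rfl⟩ := hy
    exact hc.image_closure ⟨x, hx, rfl⟩
  exact (hdisj.closure_right hopen).mono_right hcl

end CIFS

/-- If a CIFS satisfies `X ∖ closure(⋃ₑ φₑ(X)) ≠ ∅`, then there is an
open ball `B` contained in the interior of `X` with `B ∩ J = ∅` and `φ_ω(B) ∩ J = ∅`
for every nonempty word `ω`, where `J = range π` is the limit set. -/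
theorem stmt2 {n : ℕ} {E : Type*} [Countable E] [Nontrivial E]
    (S : CIFS n E) (hBDP : S.BDP)
    (π : (ℕ → E) → EuclideanSpace ℝ (Fin n))
    (hπ : ∀ ω : ℕ → E, ∀ m : ℕ,
      π ω ∈ S.compWord (List.ofFn fun i : Fin m => ω i) '' S.X)
    (hxx1 : (S.X \ closure (⋃ e : E, S.φ e '' S.X)).Nonempty) :
    ∃ (z : EuclideanSpace ℝ (Fin n)) (r : ℝ), 0 < r ∧
      Metric.ball z r ⊆ interior S.X ∧
      Metric.ball z r ∩ Set.range π = ∅ ∧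
      ∀ ω : List E, ω ≠ [] → S.compWord ω '' Metric.ball z r ∩ Set.range π = ∅ := by
  classical
  set C := closure (⋃ e : E, S.φ e '' S.X) with hC
  obtain ⟨x₀, hx₀X, hx₀C⟩ := hxx1
  have hx₀' : x₀ ∈ closure (interior S.X) := S.hXreg ▸ hx₀X
  obtain ⟨z, hz⟩ := mem_closure_iff.1 hx₀' Cᶜ isClosed_closure.isOpen_compl hx₀C
  obtain ⟨hzC, hzint⟩ := hz
  obtain ⟨r, rpos, hr⟩ := Metric.isOpen_iff.1
    (isClosed_closure.isOpen_compl.inter isOpen_interior) z ⟨hzC, hzint⟩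
  -- every point of the limit set lies in C
  have hπC : ∀ τ : ℕ → E, π τ ∈ C := by
    intro τ
    have h1 := hπ τ 1
    have h2 : (List.ofFn fun i : Fin 1 => τ i) = [τ 0] := by
      simp [List.ofFn_succ]
    rw [h2] at h1
    obtain ⟨x, hx, hxe⟩ := h1
    exact subset_closure (Set.mem_iUnion.2 ⟨τ 0, ⟨x, hx, hxe⟩⟩)
  -- extraction of the next-level point
  have key : ∀ (τ : ℕ → E) (m : ℕ), ∃ x, x ∈ S.φ (τ m) '' S.X ∧
      S.compWord (List.ofFn fun i : Fin m => τ i) x = π τ := by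
    intro τ m
    obtain ⟨u, hu, hue⟩ := hπ τ (m + 1)
    refine ⟨S.φ (τ m) u, ⟨u, hu, rfl⟩, ?_⟩
    have hsplit : (List.ofFn fun i : Fin (m + 1) => τ i) =
        (List.ofFn fun i : Fin m => τ i) ++ [τ m] := by
      rw [List.ofFn_succ']
      simp [List.concat_eq_append]
    rw [hsplit, S.compWord_append] at hue
    simpa [S.compWord_singleton] using hue
  refine ⟨z, r, rpos, fun w hw => (hr hw).2, ?_, ?_⟩
  · rw [Set.eq_empty_iff_forall_notMem]
    rintro w ⟨hwB, τ, hτ⟩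
    exact (hr hwB).1 (hτ ▸ hπC τ)
  · intro ω hω
    rw [Set.eq_empty_iff_forall_notMem]
    rintro w ⟨⟨b, hbB, hbw⟩, τ, hτ⟩
    have hbint : b ∈ interior S.X := (hr hbB).2
    have hbX : b ∈ S.X := interior_subset hbint
    by_cases hcase : ∀ (i : ℕ) (h : i < ω.length), ω[i] = τ i
    · -- the word agrees with τ
      have hωeq : ω = List.ofFn fun i : Fin ω.length => τ i := by
        apply List.ext_getElem (by simp)
        intro i h1 h2
        simp only [List.getElem_ofFn]
        exact hcase i h1
      obtain ⟨x, hxmem, hxeq⟩ := key τ ω.length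
      have hxX : x ∈ S.X := by
        obtain ⟨u, hu, rfl⟩ := hxmem
        exact S.hMapsX _ hu
      have heq : S.compWord ω b = S.compWord ω x := by
        rw [hbw, ← hτ, ← hxeq, ← hωeq]
      have hbx : b = x := S.injOn_W ω (S.hXW hbX) (S.hXW hxX) heq
      have hxC : x ∈ C := subset_closure (Set.mem_iUnion.2 ⟨τ ω.length, hxmem⟩)
      exact (hr hbB).1 (hbx ▸ hxC)
    · push_neg at hcase
      obtain ⟨i₀, hi₀⟩ := hcase
      have hex : ∃ k, ∃ h : k < ω.length, ω[k] ≠ τ k := ⟨i₀, hi₀⟩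
      set k := Nat.find hex with hkdef
      obtain ⟨hklt, hkne⟩ := Nat.find_spec hex
      have hmin : ∀ j, j < k → ∀ h : j < ω.length, ω[j] = τ j := by
        intro j hj h
        have := Nat.find_min hex hj
        push_neg at this
        exact this h
      have htake : ω.take k = List.ofFn fun i : Fin k => τ i := by
        apply List.ext_getElem (by simp [List.length_take]; omega)
        intro i h1 h2
        rw [List.length_take] at h1
        simp only [List.getElem_take, List.getElem_ofFn]
        exact hmin i (lt_min_iff.mp h1).1 (lt_min_iff.mp h1).2
      have hdecomp : ω = ω.take k ++ ω[k] :: ω.drop (k + 1) := by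
        conv_lhs => rw [← List.take_append_drop k ω]
        congr 1
        exact List.drop_eq_getElem_cons hklt
      obtain ⟨x, hxmem, hxeq⟩ := key τ k
      have hxX : x ∈ S.X := by
        obtain ⟨u, hu, rfl⟩ := hxmem
        exact S.hMapsX _ hu
      set P := S.compWord (ω.drop (k + 1)) b with hP
      have hPint : P ∈ interior S.X := S.compWord_image_interior _ ⟨b, hbint, rfl⟩
      have hPX : P ∈ S.X := interior_subset hPint
      have heq2 : S.compWord ω b =
          S.compWord (List.ofFn fun i : Fin k => τ i) (S.φ (ω[k]'hklt) P) := by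
        conv_lhs => rw [hdecomp]
        rw [S.compWord_append, htake]
        rfl
      have heq3 : S.compWord (List.ofFn fun i : Fin k => τ i) (S.φ (ω[k]'hklt) P) =
          S.compWord (List.ofFn fun i : Fin k => τ i) x := by
        rw [← heq2, hbw, ← hτ, hxeq]
      have hfinal : S.φ (ω[k]'hklt) P = x :=
        S.injOn_W _ (S.hXW (S.hMapsX _ hPX)) (S.hXW hxX) heq3
      have hmem1 : S.φ (ω[k]'hklt) P ∈ S.φ (ω[k]'hklt) '' interior S.X := ⟨P, hPint, rfl⟩
      have hmem2 : S.φ (ω[k]'hklt) P ∈ S.φ (τ k) '' S.X := by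
        rw [hfinal]; exact hxmem
      exact Set.disjoint_left.mp (S.osc_strong hkne) hmem1 hmem2
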